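/- Let Q ∈ ℝ^{k×k} be symmetric positive definite with smallest eigenvalue λ_min(Q), let Ã ∈ ℝ^{k×k}, let δ > 0, let d : ℝ → ℝᵏ be continuous with ‖d(t)‖_∞ ≤ δ for all t ≥ 0, and let χ, γ > 0 satisfy χ > ‖Ã‖₂ / λ_min(Q) and γ > δ. Suppose ε : ℝ → ℝᵏ is differentiable and satisfies, for all t ≥ 0, ε'(t) = (Ã − χ Q) ε(t) + d(t) − γ · sign(Q ε(t)), where sign is applied componentwise with sign(0) = 0. Then ε(t) → 0 as t → ∞. -/

import Mathlib

/-!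
With `V(ε) = ⟪Qε, ε⟫` one has `V' = 2⟪Qε, ε'⟫`. The switching term `d − γ sign(Qε)` is
dissipative: `⟪Qε, d − γ sign(Qε)⟫ ≤ (δ − γ) ‖Qε‖₁ ≤ 0`. Since `‖Qε‖ ≥ λ_min ‖ε‖`, the remaining
terms give `⟪Qε, Ãε − χQε⟫ ≤ −(χ λ_min − ‖Ã‖) ‖Qε‖ ‖ε‖ ≤ −(χ λ_min − ‖Ã‖) V`, so `V` decays
exponentially by Grönwall, and so does `λ_min ‖ε‖² ≤ V`.
-/

open Matrix Filter Module.End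
open scoped Matrix.Norms.L2Operator RealInnerProductSpace Topology

theorem le_mul_exp_of_hasDerivAt_le_neg_mul {f f' : ℝ → ℝ} {α a : ℝ}
    (hf : ∀ t ≥ a, HasDerivAt f (f' t) t) (hf' : ∀ t ≥ a, f' t ≤ -α * f t) {t : ℝ}
    (ht : a ≤ t) :
    f t ≤ f a * Real.exp (-α * (t - a)) := by
  have hgronwall := le_gronwallBound_of_liminf_deriv_right_le (δ := f a) (K := -α) (ε := 0)
    (b := t) (fun s hs => (hf s hs.1).continuousAt.continuousWithinAt)
    (fun s hs _ hr => (hf s hs.1).hasDerivWithinAt.liminf_right_slope_le hr)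
    le_rfl (fun s hs => by simpa using hf' s hs.1) t ⟨ht, le_rfl⟩
  rwa [gronwallBound_ε0] at hgronwall

section InnerProductSpace

variable {E : Type*} [NormedAddCommGroup E] [InnerProductSpace ℝ E]

theorem mul_norm_le_norm_of_mul_norm_sq_le_inner {lam : ℝ} {x y : E}
    (h : lam * ‖x‖ ^ 2 ≤ ⟪y, x⟫) : lam * ‖x‖ ≤ ‖y‖ := by
  rcases eq_or_ne x 0 with rfl | hx
  · simp
  refine le_of_mul_le_mul_right ?_ (norm_pos_iff.mpr hx)
  calc lam * ‖x‖ * ‖x‖ = lam * ‖x‖ ^ 2 := by ring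
    _ ≤ ⟪y, x⟫ := h
    _ ≤ ‖y‖ * ‖x‖ := real_inner_le_norm y x

theorem LinearMap.IsSymmetric.mul_norm_sq_le_inner_apply_self [FiniteDimensional ℝ E]
    {T : E →ₗ[ℝ] E} (hT : T.IsSymmetric) {lam : ℝ}
    (hlam : lam ∈ lowerBounds {r | HasEigenvalue T r}) (x : E) :
    lam * ‖x‖ ^ 2 ≤ ⟪T x, x⟫ := by
  rcases eq_or_ne x 0 with rfl | hx
  · simp
  have : Nontrivial E := nontrivial_of_ne x 0 hx
  have hbdd : BddBelow (Set.range fun y : {y : E // y ≠ 0} =>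
      RCLike.re ⟪T y, y⟫ / ‖(y : E)‖ ^ 2) :=
    ⟨-‖LinearMap.toContinuousLinearMap T‖, by
      rintro _ ⟨y, rfl⟩
      exact neg_le_of_abs_le ((LinearMap.toContinuousLinearMap T).rayleighQuotient_le_norm y)⟩
  rw [← le_div_iff₀ (by positivity)]
  exact (hlam hT.hasEigenvalue_iInf_of_finiteDimensional).trans (ciInf_le hbdd ⟨x, hx⟩)

theorem LinearMap.IsSymmetric.hasDerivAt_inner_apply_self {T : E →L[ℝ] E}
    (hT : (T : E →ₗ[ℝ] E).IsSymmetric) {x : ℝ → E} {x' : E} {t : ℝ}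
    (hx : HasDerivAt x x' t) :
    HasDerivAt (fun s => ⟪T (x s), x s⟫) (2 * ⟪T (x t), x'⟫) t := by
  refine ((T.hasFDerivAt.comp_hasDerivAt t hx).inner ℝ hx).congr_deriv ?_
  have hsymm : ⟪T x', x t⟫ = ⟪x', T (x t)⟫ := hT x' (x t)
  rw [hsymm, Function.comp_apply, real_inner_comm (T (x t)) x']
  ring

theorem inner_apply_sub_smul_add_le {T A : E →L[ℝ] E} {lam χ : ℝ} (hχ : 0 ≤ χ)
    (hA : ‖A‖ ≤ χ * lam) {x w : E} (hTx : lam * ‖x‖ ^ 2 ≤ ⟪T x, x⟫) (hw : ⟪T x, w⟫ ≤ 0) :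
    ⟪T x, A x - χ • T x + w⟫ ≤ -(χ * lam - ‖A‖) * ⟪T x, x⟫ := by
  have hAx : ⟪T x, A x⟫ ≤ ‖A‖ * (‖T x‖ * ‖x‖) :=
    calc ⟪T x, A x⟫ ≤ ‖T x‖ * ‖A x‖ := real_inner_le_norm _ _
      _ ≤ ‖T x‖ * (‖A‖ * ‖x‖) := by gcongr; exact A.le_opNorm x
      _ = ‖A‖ * (‖T x‖ * ‖x‖) := by ring
  have hTTx : χ * lam * (‖T x‖ * ‖x‖) ≤ χ * ⟪T x, T x⟫ := by
    have hlam_Tx : ‖T x‖ * (lam * ‖x‖) ≤ ‖T x‖ * ‖T x‖ :=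
      mul_le_mul_of_nonneg_left (mul_norm_le_norm_of_mul_norm_sq_le_inner hTx) (norm_nonneg _)
    rw [real_inner_self_eq_norm_sq]
    nlinarith [mul_le_mul_of_nonneg_left hlam_Tx hχ]
  have hTxx : -(χ * lam - ‖A‖) * (‖T x‖ * ‖x‖) ≤ -(χ * lam - ‖A‖) * ⟪T x, x⟫ :=
    mul_le_mul_of_nonpos_left (real_inner_le_norm _ _) (by linarith)
  rw [inner_add_right, inner_sub_right, real_inner_smul_right]
  linarith

theorem tendsto_zero_of_hasDerivAt_of_inner_apply_nonpos {T A : E →L[ℝ] E}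
    (hT : (T : E →ₗ[ℝ] E).IsSymmetric) {lam χ : ℝ} (hlam : 0 < lam)
    (hTlam : ∀ x, lam * ‖x‖ ^ 2 ≤ ⟪T x, x⟫) (hχ : 0 ≤ χ) (hA : ‖A‖ < χ * lam)
    {x w : ℝ → E} (hx : ∀ t ≥ 0, HasDerivAt x (A (x t) - χ • T (x t) + w t) t)
    (hw : ∀ t ≥ 0, ⟪T (x t), w t⟫ ≤ 0) :
    Tendsto x atTop (𝓝 0) := by
  set c := χ * lam - ‖A‖
  have hc : 0 < c := sub_pos.mpr hA
  set V := fun t => ⟪T (x t), x t⟫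
  have hV_le : ∀ t ≥ 0, V t ≤ V 0 * Real.exp (-(2 * c) * t) := by
    intro t ht
    simpa using le_mul_exp_of_hasDerivAt_le_neg_mul
      (fun s hs => hT.hasDerivAt_inner_apply_self (hx s hs))
      (fun s hs => by
        have hdiss := inner_apply_sub_smul_add_le hχ hA.le (hTlam (x s)) (hw s hs)
        linarith) ht
  have hbound_tendsto : Tendsto (fun t => V 0 / lam * Real.exp (-(2 * c) * t)) atTop (𝓝 0) := by
    simpa [Function.comp_def] using (Real.tendsto_exp_neg_atTop_nhds_zero.comp
      (tendsto_id.const_mul_atTop (by linarith : 0 < 2 * c))).const_mul (V 0 / lam)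
  have hsq : Tendsto (fun t => ‖x t‖ ^ 2) atTop (𝓝 0) := by
    refine squeeze_zero' (.of_forall fun t => by positivity)
      (eventually_atTop.2 ⟨0, fun t ht => ?_⟩) hbound_tendsto
    rw [div_mul_eq_mul_div, le_div_iff₀ hlam, mul_comm]
    exact (hTlam (x t)).trans (hV_le t ht)
  refine tendsto_zero_iff_norm_tendsto_zero.mpr ?_
  simpa [Real.sqrt_sq (norm_nonneg _)] using hsq.sqrt

end InnerProductSpace

theorem Real.self_mul_sign (r : ℝ) : r * Real.sign r = |r| := by
  rcases lt_trichotomy r 0 with h | rfl | h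
  · rw [Real.sign_of_neg h, abs_of_neg h, mul_neg_one]
  · simp
  · rw [Real.sign_of_pos h, abs_of_pos h, mul_one]

theorem dotProduct_sub_smul_sign_nonpos {ι : Type*} [Fintype ι] {y d : ι → ℝ} {δ γ : ℝ}
    (hd : ∀ j, |d j| ≤ δ) (hγ : δ ≤ γ) :
    y ⬝ᵥ (d - γ • fun j => Real.sign (y j)) ≤ 0 := by
  refine Finset.sum_nonpos fun j _ => ?_
  have hyd : y j * d j ≤ |y j| * γ :=
    calc y j * d j ≤ |y j| * |d j| := (le_abs_self _).trans (abs_mul _ _).le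
      _ ≤ |y j| * γ := by gcongr; exact (hd j).trans hγ
  simp only [Pi.sub_apply, Pi.smul_apply, smul_eq_mul]
  rw [mul_sub, mul_left_comm, Real.self_mul_sign]
  linarith

theorem Matrix.PosDef.pos_of_hasEigenvalue {n : Type*} [Fintype n] {Q : Matrix n n ℝ}
    (hQ : Q.PosDef) {r : ℝ} (hr : HasEigenvalue Q.mulVecLin r) : 0 < r := by
  obtain ⟨v, hv, hv0⟩ := hr.exists_hasEigenvector
  have hQv : Q *ᵥ v = r • v := mem_eigenspace_iff.mp hv
  have hpos := hQ.dotProduct_mulVec_pos hv0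
  rw [hQv, dotProduct_smul, smul_eq_mul, star_trivial] at hpos
  exact pos_of_mul_pos_left hpos (dotProduct_self_star_nonneg v)

theorem Matrix.hasEigenvalue_toEuclideanLin_iff {𝕜 n : Type*} [RCLike 𝕜] [Fintype n]
    [DecidableEq n] (M : Matrix n n 𝕜) {r : 𝕜} :
    HasEigenvalue (toEuclideanLin M) r ↔ HasEigenvalue M.mulVecLin r := by
  rw [hasEigenvalue_iff_mem_spectrum, hasEigenvalue_iff_mem_spectrum, ← toLin'_apply',
    spectrum_toLin', ← spectrum_toLpLin (A := M) 2]

theorem Matrix.IsHermitian.isSymmetric_toEuclideanCLM {n : Type*} [Fintype n] [DecidableEq n]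
    {Q : Matrix n n ℝ} (hQ : Q.IsHermitian) :
    (toEuclideanCLM (n := n) (𝕜 := ℝ) Q : EuclideanSpace ℝ n →ₗ[ℝ] _).IsSymmetric := by
  rw [coe_toEuclideanCLM_eq_toEuclideanLin]
  exact isSymmetric_toEuclideanLin_iff.mpr hQ

theorem Matrix.IsHermitian.mul_norm_sq_le_inner_toEuclideanCLM {n : Type*} [Fintype n]
    [DecidableEq n] {Q : Matrix n n ℝ} (hQ : Q.IsHermitian) {lam : ℝ}
    (hlam : lam ∈ lowerBounds {r | HasEigenvalue Q.mulVecLin r}) (x : EuclideanSpace ℝ n) :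
    lam * ‖x‖ ^ 2 ≤ ⟪toEuclideanCLM (n := n) (𝕜 := ℝ) Q x, x⟫ :=
  hQ.isSymmetric_toEuclideanCLM.mul_norm_sq_le_inner_apply_self (fun r hr => hlam <|
    (hasEigenvalue_toEuclideanLin_iff Q).mp (by rwa [coe_toEuclideanCLM_eq_toEuclideanLin] at hr)) x

theorem reduced_error_subsystem_tendsto_zero_general (k : ℕ)
    (Q : Matrix (Fin k) (Fin k) ℝ) (hQ : Q.PosDef)
    (lam : ℝ)
    (hlam : IsLeast {r : ℝ | Module.End.HasEigenvalue (Matrix.mulVecLin Q) r} lam)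
    (Atil : Matrix (Fin k) (Fin k) ℝ)
    (del : ℝ)
    (d : ℝ → Fin k → ℝ)
    (hdbound : ∀ t : ℝ, 0 ≤ t → ∀ j, |d t j| ≤ del)
    (chi gam : ℝ) (hchipos : 0 < chi)
    (hchi : chi > ‖Atil‖ / lam) (hgam : gam > del)
    (eps : ℝ → Fin k → ℝ)
    (hode : ∀ t : ℝ, 0 ≤ t →
      HasDerivAt eps
        ((Atil - chi • Q).mulVec (eps t) + d t
          - gam • fun j => Real.sign ((Q.mulVec (eps t)) j)) t) :
    Tendsto eps atTop (nhds 0) := by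
  -- The spectral norm `‖Atil‖` is that of `toEuclideanCLM Atil`, so we work in `EuclideanSpace`.
  let e := EuclideanSpace.equiv (Fin k) ℝ
  let T := toEuclideanCLM (n := Fin k) (𝕜 := ℝ) Q
  have hlam_pos : 0 < lam := hQ.pos_of_hasEigenvalue hlam.1
  let w t := e.symm (d t - gam • fun j => Real.sign ((Q *ᵥ eps t) j))
  have hx : ∀ t ≥ 0, HasDerivAt (fun t => e.symm (eps t))
      (toEuclideanCLM (n := Fin k) (𝕜 := ℝ) Atil (e.symm (eps t)) - chi • T (e.symm (eps t))
        + w t) t := by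
    intro t ht
    refine (e.symm.hasFDerivAt.comp_hasDerivAt t (hode t ht)).congr_deriv ?_
    simp only [sub_mulVec, smul_mulVec, map_sub, map_add, map_smul, w, T, ← add_sub_assoc]
    rfl
  have hw : ∀ t ≥ 0, ⟪T (e.symm (eps t)), w t⟫ ≤ 0 := by
    intro t ht
    calc ⟪T (e.symm (eps t)), w t⟫
        = (Q *ᵥ eps t) ⬝ᵥ (d t - gam • fun j => Real.sign ((Q *ᵥ eps t) j)) := by
          rw [EuclideanSpace.inner_eq_star_dotProduct, dotProduct_comm]
          rfl
      _ ≤ 0 := dotProduct_sub_smul_sign_nonpos (hdbound t ht) hgam.le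
  have hx_tendsto := tendsto_zero_of_hasDerivAt_of_inner_apply_nonpos
    hQ.isHermitian.isSymmetric_toEuclideanCLM hlam_pos
    (hQ.isHermitian.mul_norm_sq_le_inner_toEuclideanCLM hlam.2) hchipos.le
    ((div_lt_iff₀ hlam_pos).mp hchi) hx hw
  simpa [Function.comp_def] using (e.continuous.tendsto 0).comp hx_tendsto

/-- **convergence of the reduced error subsystem.** Let `Q` be symmetric
positive definite with smallest eigenvalue `lam`, let `Ã` be arbitrary, `δ > 0`, let
`d : ℝ → ℝᵏ` be continuous with `‖d(t)‖_∞ ≤ δ` for `t ≥ 0`, and suppose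
`χ > ‖Ã‖₂/lam` and `γ > δ`.  If a differentiable `ε : ℝ → ℝᵏ` satisfies
`ε'(t) = (Ã − χQ)ε(t) + d(t) − γ sign(Qε(t))` (sign componentwise, `sign 0 = 0`)
for all `t ≥ 0`, then `ε(t) → 0` as `t → ∞`.
(Here `‖·‖` on matrices is the spectral norm, via `Matrix.L2OpNorm`.) -/
theorem reduced_error_subsystem_tendsto_zero (k : ℕ)
    (Q : Matrix (Fin k) (Fin k) ℝ) (hQ : Q.PosDef)
    (lam : ℝ)
    (hlam : IsLeast {r : ℝ | Module.End.HasEigenvalue (Matrix.mulVecLin Q) r} lam)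
    (Atil : Matrix (Fin k) (Fin k) ℝ)
    (del : ℝ) (hdel : 0 < del)
    (d : ℝ → Fin k → ℝ) (hdcont : Continuous d)
    (hdbound : ∀ t : ℝ, 0 ≤ t → ∀ j, |d t j| ≤ del)
    (chi gam : ℝ) (hchipos : 0 < chi) (hgampos : 0 < gam)
    (hchi : chi > ‖Atil‖ / lam) (hgam : gam > del)
    (eps : ℝ → Fin k → ℝ) (heps : Differentiable ℝ eps)
    (hode : ∀ t : ℝ, 0 ≤ t →
      HasDerivAt eps
        ((Atil - chi • Q).mulVec (eps t) + d t
          - gam • fun j => Real.sign ((Q.mulVec (eps t)) j)) t) :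
    Tendsto eps atTop (nhds 0) :=
  reduced_error_subsystem_tendsto_zero_general k Q hQ lam hlam Atil del d hdbound chi gam hchipos
    hchi hgam eps hode
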